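/- arXiv:2004.05505 — 4 statements merged into one kernel-verified Lean document; each statement's English description precedes it below -/
import Mathlib

section
/- Let V ≥ 0, p > 0, A_max ≥ 0, 0 < ε ≤ A_max, and let (Z(t)), (c(t)), (d(t)) be sequences of real numbers with Z(0) = 0, c(t) ≥ 0, 0 ≤ d(t) ≤ A_max for all t, virtual-queue dynamics Z(t+1) = max(Z(t) − c(t)/p − p·d(t) + p·ε, 0), and d(t) = A_max whenever Z(t) > p·V. Then Z(t) ≤ p·(V + ε) for all t ∈ ℕ. -/
theorem stmt_14 (V p Amax ε : ℝ) (hV : 0 ≤ V) (hp : 0 < p) (hAmax : 0 ≤ Amax)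
    (hε : 0 < ε) (hεA : ε ≤ Amax)
    (Z c d : ℕ → ℝ) (hZ0 : Z 0 = 0)
    (hc : ∀ t, 0 ≤ c t) (hd : ∀ t, 0 ≤ d t) (hdA : ∀ t, d t ≤ Amax)
    (hdyn : ∀ t, Z (t + 1) = max (Z t - c t / p - p * d t + p * ε) 0)
    (hrule : ∀ t, p * V < Z t → d t = Amax) :
    ∀ t, Z t ≤ p * (V + ε) := by
  intro t
  induction t with
  | zero => rw [hZ0]; positivity
  | succ t ih =>
    have hpe : 0 ≤ p * (V + ε) := by positivity
    rw [hdyn t]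
    rcases le_or_gt (Z t) (p * V) with h | h
    · refine max_le ?_ hpe
      have hct : 0 ≤ c t / p := div_nonneg (hc t) hp.le
      have hdt : 0 ≤ p * d t := mul_nonneg hp.le (hd t)
      nlinarith [mul_pos hp hε]
    · refine max_le ?_ hpe
      have hdt := hrule t h
      have hct : 0 ≤ c t / p := div_nonneg (hc t) hp.le
      nlinarith [mul_le_mul_of_nonneg_left hεA hp.le]
end

section
/- Let p > 0, c_max ≥ 0, Q_max ≥ 0, Z_max ≥ 0, and let (S(t)), (r(t)), (c(t)), (Q(t)) be sequences of real numbers with S(0) = 0, r(t) ≥ 0, Q(t) ≥ 0, 0 ≤ c(t) ≤ c_max for all t, dynamics S(t+1) = max(S(t) − r(t), 0) + min(c(t), Q(t)), and c(t) = 0 whenever S(t) > Q_max + Z_max/p. Then S(t) ≤ Q_max + Z_max/p + c_max for all t ∈ ℕ. -/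
theorem stmt_15 (p cmax Qmax Zmax : ℝ) (hp : 0 < p) (hcmax : 0 ≤ cmax)
    (hQmax : 0 ≤ Qmax) (hZmax : 0 ≤ Zmax)
    (S r c Q : ℕ → ℝ) (hS0 : S 0 = 0)
    (hr : ∀ t, 0 ≤ r t) (hQ : ∀ t, 0 ≤ Q t)
    (hc : ∀ t, 0 ≤ c t) (hcb : ∀ t, c t ≤ cmax)
    (hdyn : ∀ t, S (t + 1) = max (S t - r t) 0 + min (c t) (Q t))
    (hrule : ∀ t, Qmax + Zmax / p < S t → c t = 0) :
    ∀ t, S t ≤ Qmax + Zmax / p + cmax := by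
  have hB : 0 ≤ Qmax + Zmax / p := by positivity
  intro t
  induction t with
  | zero => rw [hS0]; positivity
  | succ t ih =>
    rw [hdyn t]
    by_cases h : Qmax + Zmax / p < S t
    · rw [hrule t h, min_eq_left (hQ t), add_zero]
      have : max (S t - r t) 0 ≤ S t := by
        apply max_le _ (le_trans hB (le_of_lt h))
        linarith [hr t]
      linarith
    · push_neg at h
      have h1 : max (S t - r t) 0 ≤ Qmax + Zmax / p := by
        apply max_le _ hB
        linarith [hr t]
      have h2 : min (c t) (Q t) ≤ cmax := le_trans (min_le_left _ _) (hcb t)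
      linarith
end

section
/- Let p > 0, ε > 0, Z_max ≥ 0, G a positive natural number, and let (Z(τ)) and (s(τ)) be sequences of real numbers indexed by τ ∈ {t+1, …, t+G+1} such that s(τ) ≥ 0, Z(τ+1) ≥ Z(τ) − p·s(τ) + p·ε for all τ ∈ {t+1, …, t+G}, Z(t+1) ≥ 0, and Z(t+G+1) ≤ Z_max. Then G·ε ≤ Σ_{τ=t+1}^{t+G} s(τ) + Z_max/p. Consequently, if G·ε − Z_max/p ≥ Q_max for a real number Q_max, then Σ_{τ=t+1}^{t+G} s(τ) ≥ Q_max. -/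
theorem stmt_16 (p ε Zmax : ℝ) (hp : 0 < p) (hε : 0 < ε) (hZmax : 0 ≤ Zmax)
    (G t : ℕ) (hG : 0 < G)
    (Z s : ℕ → ℝ)
    (hs : ∀ τ ∈ Finset.Icc (t + 1) (t + G), 0 ≤ s τ)
    (hrec : ∀ τ ∈ Finset.Icc (t + 1) (t + G), Z (τ + 1) ≥ Z τ - p * s τ + p * ε)
    (hZ1 : 0 ≤ Z (t + 1)) (hZend : Z (t + G + 1) ≤ Zmax) :
    (G : ℝ) * ε ≤ (∑ τ ∈ Finset.Icc (t + 1) (t + G), s τ) + Zmax / p ∧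
      ∀ Qmax : ℝ, Qmax ≤ (G : ℝ) * ε - Zmax / p →
        Qmax ≤ ∑ τ ∈ Finset.Icc (t + 1) (t + G), s τ := by
  have key : ∀ k, k ≤ G →
      Z (t + 1) + (k : ℝ) * (p * ε) - p * ∑ τ ∈ Finset.Icc (t + 1) (t + k), s τ
        ≤ Z (t + 1 + k) := by
    intro k hk
    induction k with
    | zero => simp
    | succ n ih =>
      have hn : n ≤ G := Nat.le_of_succ_le hk
      have hmem : t + 1 + n ∈ Finset.Icc (t + 1) (t + G) := by
        simp [Finset.mem_Icc]; omega
      have hrec' := hrec _ hmem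
      have hsum : ∑ τ ∈ Finset.Icc (t + 1) (t + (n + 1)), s τ
          = (∑ τ ∈ Finset.Icc (t + 1) (t + n), s τ) + s (t + 1 + n) := by
        have : t + (n + 1) = (t + n) + 1 := by omega
        rw [this, Finset.sum_Icc_succ_top (by omega)]
        ring_nf
      rw [hsum]
      have h2 : t + 1 + (n + 1) = (t + 1 + n) + 1 := by omega
      rw [h2]
      have := ih hn
      push_cast
      nlinarith [this, hrec']
  have hkey := key G le_rfl
  have hZG : Z (t + 1 + G) = Z (t + G + 1) := by ring_nf
  rw [hZG] at hkey
  set S := ∑ τ ∈ Finset.Icc (t + 1) (t + G), s τ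
  have hmain : (G : ℝ) * ε ≤ S + Zmax / p := by
    have h1 : (G : ℝ) * (p * ε) ≤ p * S + Zmax := by nlinarith
    have h2 : Zmax / p * p = Zmax := div_mul_cancel₀ Zmax hp.ne'
    nlinarith
  refine ⟨hmain, fun Qmax hQ => ?_⟩
  linarith
end

section
/- Let n be a positive natural number, p ≥ 1, m ≥ 0, c_max ≥ 0, A_max ≥ 0 real numbers, and for i ∈ {1, …, n} let S_i, Q_i, Z_i, Q̂_i, Ẑ_i, c_i, ĉ_i be real numbers satisfying: (i) Σ_i (S_i − Q_i − Z_i/p)·c_i ≤ Σ_i (S_i − Q_i − Z_i/p)·ĉ_i; (ii) 0 ≤ ĉ_i ≤ c_max; (iii) Q̂_i − Q_i ≤ (c_max + A_max)·m; (iv) Ẑ_i − Z_i ≤ (c_max/p + p·A_max)·m. Then Σ_i (S_i − Q_i − Z_i/p)·c_i − Σ_i (S_i − Q̂_i − Ẑ_i/p)·ĉ_i ≤ n·m·c_max·((1 + 1/p²)·c_max + 2·A_max). -/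
theorem stmt_19 (n : ℕ) (hn : 0 < n) (p m cmax Amax : ℝ)
    (hp : 1 ≤ p) (hm : 0 ≤ m) (hcmax : 0 ≤ cmax) (hAmax : 0 ≤ Amax)
    (S Q Z Qhat Zhat c chat : Fin n → ℝ)
    (hopt : ∑ i, (S i - Q i - Z i / p) * c i ≤ ∑ i, (S i - Q i - Z i / p) * chat i)
    (hchat₀ : ∀ i, 0 ≤ chat i) (hchatb : ∀ i, chat i ≤ cmax)
    (hQhat : ∀ i, Qhat i - Q i ≤ (cmax + Amax) * m)
    (hZhat : ∀ i, Zhat i - Z i ≤ (cmax / p + p * Amax) * m) :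
    (∑ i, (S i - Q i - Z i / p) * c i) - ∑ i, (S i - Qhat i - Zhat i / p) * chat i ≤
      (n : ℝ) * m * cmax * ((1 + 1 / p ^ 2) * cmax + 2 * Amax) := by
  have hp0 : 0 < p := lt_of_lt_of_le one_pos hp
  have key : ∀ i : Fin n,
      (S i - Q i - Z i / p) * chat i - (S i - Qhat i - Zhat i / p) * chat i ≤
        m * cmax * ((1 + 1 / p ^ 2) * cmax + 2 * Amax) := by
    intro i
    have h1 := hQhat i
    have h2 := hZhat i
    have hc0 := hchat₀ i
    have hcb := hchatb i
    have heq : (S i - Q i - Z i / p) * chat i - (S i - Qhat i - Zhat i / p) * chat i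
        = ((Qhat i - Q i) + (Zhat i - Z i) / p) * chat i := by ring
    rw [heq]
    have hbound : (Qhat i - Q i) + (Zhat i - Z i) / p ≤
        (cmax + Amax) * m + ((cmax / p + p * Amax) * m) / p := by
      gcongr
    have hBnn : 0 ≤ (cmax + Amax) * m + ((cmax / p + p * Amax) * m) / p := by
      positivity
    have : ((Qhat i - Q i) + (Zhat i - Z i) / p) * chat i ≤
        ((cmax + Amax) * m + ((cmax / p + p * Amax) * m) / p) * cmax := by
      apply mul_le_mul hbound hcb hc0 hBnn
    refine this.trans (le_of_eq ?_)
    field_simp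
    ring
  calc (∑ i, (S i - Q i - Z i / p) * c i) - ∑ i, (S i - Qhat i - Zhat i / p) * chat i
      ≤ (∑ i, (S i - Q i - Z i / p) * chat i) - ∑ i, (S i - Qhat i - Zhat i / p) * chat i := by
        linarith
    _ = ∑ i, ((S i - Q i - Z i / p) * chat i - (S i - Qhat i - Zhat i / p) * chat i) := by
        rw [Finset.sum_sub_distrib]
    _ ≤ ∑ _i : Fin n, m * cmax * ((1 + 1 / p ^ 2) * cmax + 2 * Amax) :=
        Finset.sum_le_sum fun i _ => key i
    _ = (n : ℝ) * m * cmax * ((1 + 1 / p ^ 2) * cmax + 2 * Amax) := by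
        rw [Finset.sum_const, Finset.card_univ, Fintype.card_fin, nsmul_eq_mul]; ring
end
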